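/- arXiv:1004.3668 — 9 statements merged into one kernel-verified Lean document; each statement's English description precedes it below -/
import Mathlib

section
/- Let G = (V, A) be a finite loopless directed graph, r ∈ V, and let T be an r-branching cover of G. Then for every set S ⊆ V \ {r} such that A(S) ≠ ∅ (S induces at least one arc of A), we have T ∩ δ⁻(S) ≠ ∅, i.e. some arc of T enters S from outside. -/
/-- `δ⁻(S)`: the arcs of `A` entering `S` from outside. -/
def deltaMinus {V : Type*} [DecidableEq V] (A : Finset (V × V)) (S : Finset V) :
    Finset (V × V) :=
  A.filter fun e => e.1 ∉ S ∧ e.2 ∈ S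

/-- `Reaches F u v`: there is a directed path from `u` to `v` using only arcs of `F`. -/
def Reaches {V : Type*} (F : Finset (V × V)) (u v : V) : Prop :=
  Relation.ReflTransGen (fun a b => (a, b) ∈ F) u v

/-- `V(T)`: the set of end-nodes of the arcs in `T`. -/
def vertexSet {V : Type*} (T : Finset (V × V)) : Set V :=
  {v | ∃ e ∈ T, e.1 = v ∨ e.2 = v}

/-- A vertex cover: every arc has at least one endpoint in `U`. -/
def IsVertexCover {V : Type*} (A : Finset (V × V)) (U : Set V) : Prop :=
  ∀ e ∈ A, e.1 ∈ U ∨ e.2 ∈ U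

/-- An `r`-branching: a subset `T ⊆ A` such that every vertex incident to an arc of `T`
is reachable from `r` using only arcs of `T`, and every vertex has at most one arc of `T`
entering it. -/
def IsBranching {V : Type*} [DecidableEq V] (A T : Finset (V × V)) (r : V) : Prop :=
  T ⊆ A ∧ (∀ v ∈ vertexSet T, Reaches T r v) ∧
    ∀ v : V, (T.filter fun e => e.2 = v).card ≤ 1

/-- An `r`-branching cover: an `r`-branching whose vertex set is a vertex cover. -/
def IsBranchingCover {V : Type*} [DecidableEq V] (A T : Finset (V × V)) (r : V) : Prop :=
  IsBranching A T r ∧ IsVertexCover A (vertexSet T)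


lemma cross_step {V : Type*} {R : V → V → Prop} {S : Finset V} {r v : V}
    (h : Relation.ReflTransGen R r v) (hr : r ∉ S) (hv : v ∈ S) :
    ∃ a b, R a b ∧ a ∉ S ∧ b ∈ S := by
  induction h with
  | refl => exact absurd hv hr
  | @tail b c hab hbc ih =>
    by_cases hb : b ∈ S
    · exact ih hb
    · exact ⟨b, c, hbc, hb, hv⟩

/-- if `T` is an `r`-branching cover of a finite loopless digraph `G = (V, A)`
and `S ⊆ V \ {r}` induces at least one arc of `A`, then some arc of `T` enters `S`. -/
theorem stmt0 {V : Type*} [Fintype V] [DecidableEq V]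
    (A : Finset (V × V)) (hloop : ∀ e ∈ A, e.1 ≠ e.2) (r : V)
    (T : Finset (V × V)) (hT : IsBranchingCover A T r)
    (S : Finset V) (hrS : r ∉ S)
    (hAS : (A.filter fun e => e.1 ∈ S ∧ e.2 ∈ S).Nonempty) :
    (T ∩ deltaMinus A S).Nonempty := by
  obtain ⟨e, he⟩ := hAS
  simp only [Finset.mem_filter] at he
  obtain ⟨heA, he1, he2⟩ := he
  obtain ⟨⟨hTA, hreach, -⟩, hcov⟩ := hT
  have : ∃ v ∈ S, v ∈ vertexSet T := by
    rcases hcov e heA with h | h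
    · exact ⟨e.1, he1, h⟩
    · exact ⟨e.2, he2, h⟩
  obtain ⟨v, hvS, hvT⟩ := this
  obtain ⟨a, b, hab, haS, hbS⟩ := cross_step (hreach v hvT) hrS hvS
  refine ⟨(a, b), ?_⟩
  simp only [Finset.mem_inter, deltaMinus, Finset.mem_filter]
  exact ⟨hab, hTA hab, haS, hbS⟩
end

section
/- Let G = (V, A) be a finite loopless directed graph, r ∈ V, c : A → ℚ non-negative, and let 𝓕 = {S ⊆ V \ {r} : A(S) ≠ ∅}. Suppose y assigns a non-negative rational y_S to each S ∈ 𝓕 and satisfies, for every arc e ∈ A, ∑_{S ∈ 𝓕 : e ∈ δ⁻(S)} y_S ≤ c(e). Then for every r-branching cover T of G, ∑_{S ∈ 𝓕} y_S ≤ ∑_{e ∈ T} c(e). -/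
theorem Finset.sum_le_sum_of_forall_exists_rel {ι κ M : Type*} [AddCommMonoid M] [PartialOrder M]
    [IsOrderedAddMonoid M] {s : Finset ι} {t : Finset κ} {R : ι → κ → Prop}
    [∀ i j, Decidable (R i j)] {y : ι → M} {c : κ → M} (hy : ∀ i ∈ s, 0 ≤ y i)
    (hcover : ∀ i ∈ s, ∃ j ∈ t, R i j)
    (hfeas : ∀ j ∈ t, ∑ i ∈ s.bipartiteBelow R j, y i ≤ c j) :
    ∑ i ∈ s, y i ≤ ∑ j ∈ t, c j :=
  calc ∑ i ∈ s, y i ≤ ∑ i ∈ s, ∑ _j ∈ t.bipartiteAbove R i, y i := by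
        refine Finset.sum_le_sum fun i hi => ?_
        obtain ⟨j, hj, hij⟩ := hcover i hi
        exact Finset.single_le_sum (f := fun _ => y i) (fun _ _ => hy i hi)
          ((Finset.mem_bipartiteAbove R).2 ⟨hj, hij⟩)
    _ = ∑ j ∈ t, ∑ i ∈ s.bipartiteBelow R j, y i :=
        Finset.sum_sum_bipartiteAbove_eq_sum_sum_bipartiteBelow R fun i _ => y i
    _ ≤ ∑ j ∈ t, c j := Finset.sum_le_sum hfeas

theorem Reaches.exists_fst_notMem_snd_mem {V : Type*} {F : Finset (V × V)} {u v : V}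
    (h : Reaches F u v) {S : Set V} (hu : u ∉ S) (hv : v ∈ S) :
    ∃ e ∈ F, e.1 ∉ S ∧ e.2 ∈ S := by
  induction h with
  | refl => exact absurd hv hu
  | @tail a b _ hab ih =>
    by_cases ha : a ∈ S
    · exact ih ha
    · exact ⟨(a, b), hab, ha, hv⟩

theorem IsBranchingCover.exists_mem_deltaMinus {V : Type*} [DecidableEq V]
    {A T : Finset (V × V)} {r : V} (hT : IsBranchingCover A T r) {S : Finset V} (hrS : r ∉ S)
    (hS : (A.filter fun e => e.1 ∈ S ∧ e.2 ∈ S).Nonempty) :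
    ∃ e ∈ T, e ∈ deltaMinus A S := by
  obtain ⟨⟨hTA, hreach, -⟩, hcov⟩ := hT
  obtain ⟨f, hf⟩ := hS
  rw [Finset.mem_filter] at hf
  obtain ⟨w, hwS, hwT⟩ : ∃ w ∈ S, w ∈ vertexSet T := by
    rcases hcov f hf.1 with h | h
    exacts [⟨f.1, hf.2.1, h⟩, ⟨f.2, hf.2.2, h⟩]
  obtain ⟨e, heT, he⟩ :=
    (hreach w hwT).exists_fst_notMem_snd_mem (S := ↑S) (by simpa using hrS) (by simpa using hwS)
  exact ⟨e, heT, Finset.mem_filter.2 ⟨hTA heT, by simpa using he⟩⟩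

theorem stmt1_general {V : Type*} [Fintype V] [DecidableEq V]
    (A : Finset (V × V)) (r : V)
    (c : V × V → ℚ)
    (𝓕 : Finset (Finset V))
    (h𝓕 : 𝓕 = Finset.univ.filter fun S : Finset V =>
      r ∉ S ∧ (A.filter fun e => e.1 ∈ S ∧ e.2 ∈ S).Nonempty)
    (y : Finset V → ℚ) (hy : ∀ S ∈ 𝓕, 0 ≤ y S)
    (hfeas : ∀ e ∈ A, ∑ S ∈ 𝓕.filter (fun S => e ∈ deltaMinus A S), y S ≤ c e)
    (T : Finset (V × V)) (hT : IsBranchingCover A T r) :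
    ∑ S ∈ 𝓕, y S ≤ ∑ e ∈ T, c e := by
  refine Finset.sum_le_sum_of_forall_exists_rel (R := fun S e => e ∈ deltaMinus A S) hy
    (fun S hS => ?_) (fun e he => hfeas e (hT.1.1 he))
  obtain ⟨-, hrS, hAS⟩ := Finset.mem_filter.1 (h𝓕 ▸ hS)
  exact hT.exists_mem_deltaMinus hrS hAS

/-- weak duality: if `y` is a non-negative dual solution on
`𝓕 = {S ⊆ V \ {r} : A(S) ≠ ∅}` satisfying `∑_{S : e ∈ δ⁻(S)} y_S ≤ c(e)` for every arc `e`,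
then `∑_{S ∈ 𝓕} y_S` is at most the cost of every `r`-branching cover `T`. -/
theorem stmt1 {V : Type*} [Fintype V] [DecidableEq V]
    (A : Finset (V × V)) (hloop : ∀ e ∈ A, e.1 ≠ e.2) (r : V)
    (c : V × V → ℚ) (hc : ∀ e ∈ A, 0 ≤ c e)
    (𝓕 : Finset (Finset V))
    (h𝓕 : 𝓕 = Finset.univ.filter fun S : Finset V =>
      r ∉ S ∧ (A.filter fun e => e.1 ∈ S ∧ e.2 ∈ S).Nonempty)
    (y : Finset V → ℚ) (hy : ∀ S ∈ 𝓕, 0 ≤ y S)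
    (hfeas : ∀ e ∈ A, ∑ S ∈ 𝓕.filter (fun S => e ∈ deltaMinus A S), y S ≤ c e)
    (T : Finset (V × V)) (hT : IsBranchingCover A T r) :
    ∑ S ∈ 𝓕, y S ≤ ∑ e ∈ T, c e :=
  stmt1_general A r c 𝓕 h𝓕 y hy hfeas T hT
end

section
/- For every r-branching cover T of the directed graph G₁, the index set I = {i ∈ {1,…,q} : (r, u_i) ∈ T} satisfies ⋃_{i ∈ I} S_i = E, and the total cost of the arcs of T equals ∑_{i ∈ I} w_i. -/
open scoped Classical

/-- Vertex type of the graph `G₁`: the root `r`, nodes `u_1, …, u_q`,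
nodes `e_1, …, e_p` and nodes `e'_1, …, e'_p`. -/
abbrev Node (p q : ℕ) := Unit ⊕ Fin q ⊕ Fin p ⊕ Fin p

def root (p q : ℕ) : Node p q := Sum.inl ()
def uNode (p : ℕ) {q : ℕ} (i : Fin q) : Node p q := Sum.inr (Sum.inl i)
def eNode {p : ℕ} (q : ℕ) (k : Fin p) : Node p q := Sum.inr (Sum.inr (Sum.inl k))
def e'Node {p : ℕ} (q : ℕ) (k : Fin p) : Node p q := Sum.inr (Sum.inr (Sum.inr k))

/-- Arcs of `G₁`: `(r, u_i)` for every `i`, `(u_i, e_k)` whenever `e_k ∈ S_i`,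
and `(e_k, e'_k)` for every `k`. -/
def arcsG1 (p q : ℕ) (S : Fin q → Finset (Fin p)) : Finset (Node p q × Node p q) :=
  (Finset.univ.image fun i : Fin q => (root p q, uNode p i)) ∪
  ((Finset.univ.filter fun x : Fin q × Fin p => x.2 ∈ S x.1).image
      fun x => (uNode p x.1, eNode q x.2)) ∪
  (Finset.univ.image fun k : Fin p => (eNode q k, e'Node q k))

/-- Arc costs of `G₁`: the arc `(r, u_i)` costs `w i`, all other arcs cost `0`. -/
def costG1 (p q : ℕ) (w : Fin q → ℚ) : Node p q × Node p q → ℚ :=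
  fun e => match e with
  | (Sum.inl _, Sum.inr (Sum.inl i)) => w i
  | _ => 0

lemma mem_arcsG1 {p q : ℕ} {S : Fin q → Finset (Fin p)} {x : Node p q × Node p q} :
    x ∈ arcsG1 p q S ↔
      (∃ i, x = (root p q, uNode p i)) ∨
      (∃ i k, k ∈ S i ∧ x = (uNode p i, eNode q k)) ∨
      (∃ k, x = (eNode q k, e'Node q k)) := by
  simp only [arcsG1, Finset.mem_union, Finset.mem_image, Finset.mem_filter,
    Finset.mem_univ, true_and]
  constructor
  · rintro ((⟨i, rfl⟩ | ⟨⟨i, k⟩, hk, rfl⟩) | ⟨k, rfl⟩)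
    · exact Or.inl ⟨i, rfl⟩
    · exact Or.inr (Or.inl ⟨i, k, hk, rfl⟩)
    · exact Or.inr (Or.inr ⟨k, rfl⟩)
  · rintro (⟨i, rfl⟩ | ⟨i, k, hk, rfl⟩ | ⟨k, rfl⟩)
    · exact Or.inl (Or.inl ⟨i, rfl⟩)
    · exact Or.inl (Or.inr ⟨(i, k), hk, rfl⟩)
    · exact Or.inr ⟨k, rfl⟩

lemma reach_eNode {p q : ℕ} {S : Fin q → Finset (Fin p)}
    {T : Finset (Node p q × Node p q)} (hTA : T ⊆ arcsG1 p q S)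
    {k : Fin p} (h : Reaches T (root p q) (eNode q k)) :
    ∃ i, (root p q, uNode p i) ∈ T ∧ k ∈ S i := by
  rcases h.cases_tail with h1 | ⟨c, hrc, hcE⟩
  · exact absurd h1 (by simp [eNode, root])
  rcases mem_arcsG1.1 (hTA hcE) with ⟨i, hi⟩ | ⟨i, k', hk', hi⟩ | ⟨k', hi⟩
  · exact absurd (congrArg Prod.snd hi) (by simp [eNode, uNode])
  · obtain ⟨h1, h2⟩ := Prod.mk.injEq .. ▸ hi
    obtain rfl : k' = k := by simpa [eNode] using h2.symm
    subst h1
    rcases hrc.cases_tail with h3 | ⟨d, _, hdU⟩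
    · exact absurd h3 (by simp [uNode, root])
    rcases mem_arcsG1.1 (hTA hdU) with ⟨j, hj⟩ | ⟨j, k2, _, hj⟩ | ⟨k2, hj⟩
    · obtain ⟨h4, h5⟩ := Prod.mk.injEq .. ▸ hj
      obtain rfl : j = i := by simpa [uNode] using h5.symm
      subst h4
      exact ⟨_, hdU, hk'⟩
    · exact absurd (congrArg Prod.snd hj) (by simp [uNode, eNode])
    · exact absurd (congrArg Prod.snd hj) (by simp [uNode, e'Node])
  · exact absurd (congrArg Prod.snd hi) (by simp [eNode, e'Node])

/-- for every `r`-branching cover `T` of `G₁`, the index set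
`I = {i : (r, u_i) ∈ T}` satisfies `⋃_{i ∈ I} S_i = E`, and the total cost of the arcs
of `T` equals `∑_{i ∈ I} w_i`. -/
theorem stmt2 (p q : ℕ) (hp : 1 ≤ p) (S : Fin q → Finset (Fin p))
    (w : Fin q → ℚ) (hw : ∀ i, 0 ≤ w i)
    (T : Finset (Node p q × Node p q))
    (hT : IsBranchingCover (arcsG1 p q S) T (root p q)) :
    ((Finset.univ.filter fun i : Fin q => (root p q, uNode p i) ∈ T).biUnion S
        = Finset.univ) ∧
    (∑ e ∈ T, costG1 p q w e
        = ∑ i ∈ Finset.univ.filter (fun i : Fin q => (root p q, uNode p i) ∈ T), w i) := by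
  obtain ⟨⟨hTA, hreach, _⟩, hcov⟩ := hT
  have key : ∀ k : Fin p, ∃ i, (root p q, uNode p i) ∈ T ∧ k ∈ S i := by
    intro k
    have harc : (eNode q k, e'Node q k) ∈ arcsG1 p q S := mem_arcsG1.2 (Or.inr (Or.inr ⟨k, rfl⟩))
    rcases hcov _ harc with hE | hE'
    · exact reach_eNode hTA (hreach _ hE)
    · have h := hreach _ hE'
      rcases h.cases_tail with h1 | ⟨c, hrc, hcE⟩
      · exact absurd h1 (by simp [e'Node, root])
      rcases mem_arcsG1.1 (hTA hcE) with ⟨i, hi⟩ | ⟨i, k', _, hi⟩ | ⟨k', hi⟩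
      · exact absurd (congrArg Prod.snd hi) (by simp [e'Node, uNode])
      · exact absurd (congrArg Prod.snd hi) (by simp [e'Node, eNode])
      · obtain ⟨h1, h2⟩ := Prod.mk.injEq .. ▸ hi
        obtain rfl : k' = k := by simpa [e'Node] using h2.symm
        subst h1
        exact reach_eNode hTA hrc
  constructor
  · apply Finset.eq_univ_iff_forall.2
    intro k
    obtain ⟨i, hiT, hik⟩ := key k
    exact Finset.mem_biUnion.2 ⟨i, Finset.mem_filter.2 ⟨Finset.mem_univ _, hiT⟩, hik⟩
  · have hsplit : T.filter (fun e => e.1 = root p q)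
        = (Finset.univ.filter fun i : Fin q => (root p q, uNode p i) ∈ T).image
            (fun i => (root p q, uNode p i)) := by
      ext x
      simp only [Finset.mem_filter, Finset.mem_image, Finset.mem_univ, true_and]
      constructor
      · rintro ⟨hxT, hx1⟩
        rcases mem_arcsG1.1 (hTA hxT) with ⟨i, rfl⟩ | ⟨i, k, _, rfl⟩ | ⟨k, rfl⟩
        · exact ⟨i, hxT, rfl⟩
        · exact absurd hx1 (by simp [uNode, root])
        · exact absurd hx1 (by simp [eNode, root])
      · rintro ⟨i, hiT, rfl⟩
        exact ⟨hiT, rfl⟩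
    calc ∑ e ∈ T, costG1 p q w e
        = ∑ e ∈ T.filter (fun e => e.1 = root p q), costG1 p q w e := by
          rw [Finset.sum_filter]
          apply Finset.sum_congr rfl
          intro e _
          rcases e with ⟨a, b⟩
          rcases a with _ | a
          · simp [root]
          · have hne : ¬ ((Sum.inr a : Node p q) = root p q) := by simp [root]
            rw [if_neg hne]
            rcases b with _ | b
            · simp [costG1]
            · rcases b with _ | _ <;> simp [costG1]
      _ = ∑ i ∈ Finset.univ.filter (fun i : Fin q => (root p q, uNode p i) ∈ T), w i := by
          rw [hsplit, Finset.sum_image (by intro a _ b _ h; simpa [uNode, root] using h)]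
          apply Finset.sum_congr rfl
          intro i _
          simp [costG1, root, uNode]
end

section
/- For every index set I ⊆ {1,…,q} with ⋃_{i ∈ I} S_i = E, there exists an r-branching cover T of the directed graph G₁ whose total arc cost equals ∑_{i ∈ I} w_i. -/
/-- for every index set `I` with `⋃_{i ∈ I} S_i = E`, there is an
`r`-branching cover `T` of `G₁` whose total arc cost equals `∑_{i ∈ I} w_i`. -/
theorem stmt3 (p q : ℕ) (hp : 1 ≤ p) (S : Fin q → Finset (Fin p))
    (w : Fin q → ℚ) (hw : ∀ i, 0 ≤ w i)
    (I : Finset (Fin q)) (hI : I.biUnion S = Finset.univ) :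
    ∃ T : Finset (Node p q × Node p q),
      IsBranchingCover (arcsG1 p q S) T (root p q) ∧
      ∑ e ∈ T, costG1 p q w e = ∑ i ∈ I, w i := by
  have hcov : ∀ k : Fin p, ∃ i, i ∈ I ∧ k ∈ S i := by
    intro k
    have : k ∈ I.biUnion S := hI ▸ Finset.mem_univ k
    simpa [Finset.mem_biUnion] using this
  choose f hfI hfS using hcov
  set A : Finset (Node p q × Node p q) :=
    I.image (fun i => (root p q, uNode p i)) with hA
  set B : Finset (Node p q × Node p q) :=
    Finset.univ.image (fun k : Fin p => (uNode p (f k), eNode q k)) with hB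
  refine ⟨A ∪ B, ⟨⟨?_, ?_, ?_⟩, ?_⟩, ?_⟩
  · -- subset of arcs
    intro e he
    rcases Finset.mem_union.mp he with h | h
    · rcases Finset.mem_image.mp h with ⟨i, hi, rfl⟩
      simp [arcsG1, Finset.mem_union, Finset.mem_image]
    · rcases Finset.mem_image.mp h with ⟨k, _, rfl⟩
      refine Finset.mem_union.mpr (Or.inl (Finset.mem_union.mpr (Or.inr ?_)))
      refine Finset.mem_image.mpr ⟨(f k, k), ?_, rfl⟩
      simp [hfS k]
  · -- reachability
    have hrU : ∀ i, i ∈ I → Reaches (A ∪ B) (root p q) (uNode p i) := by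
      intro i hi
      exact Relation.ReflTransGen.single
        (Finset.mem_union.mpr (Or.inl (Finset.mem_image.mpr ⟨i, hi, rfl⟩)))
    have hrE : ∀ k : Fin p, Reaches (A ∪ B) (root p q) (eNode q k) := by
      intro k
      refine (hrU (f k) (hfI k)).tail ?_
      exact Finset.mem_union.mpr (Or.inr (Finset.mem_image.mpr ⟨k, Finset.mem_univ k, rfl⟩))
    intro v hv
    rcases hv with ⟨e, he, h | h⟩ <;>
    · rcases Finset.mem_union.mp he with h' | h'
      · rcases Finset.mem_image.mp h' with ⟨i, hi, rfl⟩
        first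
          | (subst h; exact Relation.ReflTransGen.refl)
          | (subst h; exact hrU i hi)
      · rcases Finset.mem_image.mp h' with ⟨k, _, rfl⟩
        first
          | (subst h; exact hrU (f k) (hfI k))
          | (subst h; exact hrE k)
  · -- in-degree ≤ 1
    intro v
    refine Finset.card_le_one.mpr ?_
    intro a ha b hb
    simp only [Finset.mem_filter, Finset.mem_union] at ha hb
    obtain ⟨ha1, ha2⟩ := ha
    obtain ⟨hb1, hb2⟩ := hb
    have hmem : ∀ c : Node p q × Node p q, c ∈ A ∨ c ∈ B →
        (∃ i ∈ I, c = (root p q, uNode p i)) ∨ ∃ k : Fin p, c = (uNode p (f k), eNode q k) := by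
      intro c hc
      rcases hc with h | h
      · rcases Finset.mem_image.mp h with ⟨i, hi, rfl⟩; exact Or.inl ⟨i, hi, rfl⟩
      · rcases Finset.mem_image.mp h with ⟨k, _, rfl⟩; exact Or.inr ⟨k, rfl⟩
    rcases hmem a ha1 with ⟨i, hi, rfl⟩ | ⟨k, rfl⟩ <;>
      rcases hmem b hb1 with ⟨j, hj, rfl⟩ | ⟨l, rfl⟩
    · simp_all [uNode, eNode, root, Prod.ext_iff]
    · exact absurd (ha2.trans hb2.symm) (by simp [uNode, eNode])
    · exact absurd (ha2.trans hb2.symm) (by simp [uNode, eNode])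
    · have hkl : k = l := by
        have := ha2.trans hb2.symm
        simpa [eNode] using this
      subst hkl; rfl
  · -- vertex cover
    have hI0 : ∃ i0, i0 ∈ I := ⟨f ⟨0, hp⟩, hfI _⟩
    obtain ⟨i0, hi0⟩ := hI0
    have hr : root p q ∈ vertexSet (A ∪ B) :=
      ⟨(root p q, uNode p i0),
        Finset.mem_union.mpr (Or.inl (Finset.mem_image.mpr ⟨i0, hi0, rfl⟩)), Or.inl rfl⟩
    have hE : ∀ k : Fin p, eNode q k ∈ vertexSet (A ∪ B) := fun k =>
      ⟨(uNode p (f k), eNode q k),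
        Finset.mem_union.mpr (Or.inr (Finset.mem_image.mpr ⟨k, Finset.mem_univ k, rfl⟩)),
        Or.inr rfl⟩
    intro e he
    simp only [arcsG1, Finset.mem_union, Finset.mem_image, Finset.mem_filter] at he
    rcases he with (⟨i, _, rfl⟩ | ⟨x, _, rfl⟩) | ⟨k, _, rfl⟩
    · exact Or.inl hr
    · exact Or.inr (hE x.2)
    · exact Or.inl (hE k)
  · -- cost
    have hdisj : Disjoint A B := by
      rw [Finset.disjoint_left]
      intro c hc hc'
      rcases Finset.mem_image.mp hc with ⟨i, _, rfl⟩
      rcases Finset.mem_image.mp hc' with ⟨k, _, h⟩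
      simp [root, uNode, eNode, Prod.ext_iff] at h
    rw [Finset.sum_union hdisj]
    have hBsum : ∑ e ∈ B, costG1 p q w e = 0 := by
      refine Finset.sum_eq_zero ?_
      intro e he
      rcases Finset.mem_image.mp he with ⟨k, _, rfl⟩
      simp [costG1, uNode, eNode]
    have hAsum : ∑ e ∈ A, costG1 p q w e = ∑ i ∈ I, w i := by
      rw [hA, Finset.sum_image ?_]
      · simp [costG1, root, uNode]
      · intro i _ j _ h
        simpa [root, uNode, Prod.ext_iff] using h
    rw [hAsum, hBsum, add_zero]
end

section
/- Every r-branching cover T of the directed graph G₁ contains all the vertices e_1, …, e_p, that is, e_k ∈ V(T) for every 1 ≤ k ≤ p; moreover each such e_k is entered in T by an arc (u_i, e_k) for some i with (r, u_i) ∈ T. -/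

lemma mem_arcs {p q : ℕ} {S : Fin q → Finset (Fin p)} {a b : Node p q}
    (h : (a, b) ∈ arcsG1 p q S) :
    (∃ i : Fin q, a = root p q ∧ b = uNode p i) ∨
    (∃ (i : Fin q) (k : Fin p), k ∈ S i ∧ a = uNode p i ∧ b = eNode q k) ∨
    (∃ k : Fin p, a = eNode q k ∧ b = e'Node q k) := by
  simp only [arcsG1, Finset.mem_union, Finset.mem_image, Finset.mem_filter,
    Finset.mem_univ, true_and, Prod.mk.injEq, Prod.exists] at h
  rcases h with (h | h) | h
  · obtain ⟨i, h1, h2⟩ := h; exact Or.inl ⟨i, h1.symm, h2.symm⟩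
  · obtain ⟨i, k, hk, h1, h2⟩ := h; exact Or.inr (Or.inl ⟨i, k, hk, h1.symm, h2.symm⟩)
  · obtain ⟨k, h1, h2⟩ := h; exact Or.inr (Or.inr ⟨k, h1.symm, h2.symm⟩)

/-- every `r`-branching cover `T` of `G₁` contains all the vertices
`e_1, …, e_p`, and each `e_k` is entered in `T` by an arc `(u_i, e_k)` for some `i`
with `(r, u_i) ∈ T`. -/
theorem stmt4 (p q : ℕ) (hp : 1 ≤ p) (S : Fin q → Finset (Fin p))
    (w : Fin q → ℚ) (hw : ∀ i, 0 ≤ w i)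
    (T : Finset (Node p q × Node p q))
    (hT : IsBranchingCover (arcsG1 p q S) T (root p q)) :
    ∀ k : Fin p, eNode q k ∈ vertexSet T ∧
      ∃ i : Fin q, (uNode p i, eNode q k) ∈ T ∧ (root p q, uNode p i) ∈ T := by
  obtain ⟨⟨hTA, hreach, _⟩, hcov⟩ := hT
  intro k
  have hkV : eNode q k ∈ vertexSet T := by
    have harc : (eNode q k, e'Node q k) ∈ arcsG1 p q S := by
      simp only [arcsG1, Finset.mem_union, Finset.mem_image, Finset.mem_univ, true_and]
      exact Or.inr ⟨k, rfl⟩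
    rcases hcov _ harc with h | h
    · exact h
    · have hre := hreach _ h
      rcases hre.cases_tail with heq | ⟨c, _, hcT⟩
      · exact absurd heq (by simp [root, e'Node])
      · rcases mem_arcs (hTA hcT) with ⟨i, _, hb⟩ | ⟨i, k', _, _, hb⟩ | ⟨k', hc, hb⟩
        · exact absurd hb (by simp [uNode, e'Node])
        · exact absurd hb (by simp [eNode, e'Node])
        · have hk' : k' = k := by
            have := hb.symm
            simpa [e'Node] using this
          subst hk'
          exact ⟨(c, e'Node q k'), hcT, Or.inl hc⟩
  refine ⟨hkV, ?_⟩
  have hre := hreach _ hkV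
  rcases hre.cases_tail with heq | ⟨c, _, hcT⟩
  · exact absurd heq (by simp [root, eNode])
  rcases mem_arcs (hTA hcT) with ⟨i, _, hb⟩ | ⟨i, k', _, hc, hb⟩ | ⟨k', _, hb⟩
  · exact absurd hb (by simp [uNode, eNode])
  · have hk' : k' = k := by
      have := hb.symm
      simpa [eNode] using this
    subst hk'
    subst hc
    refine ⟨i, hcT, ?_⟩
    have hiV : uNode p i ∈ vertexSet T := ⟨(uNode p i, eNode q k'), hcT, Or.inl rfl⟩
    have hre2 := hreach _ hiV
    rcases hre2.cases_tail with heq | ⟨d, _, hdT⟩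
    · exact absurd heq (by simp [root, uNode])
    rcases mem_arcs (hTA hdT) with ⟨i', hd, hb'⟩ | ⟨i', k'', _, _, hb'⟩ | ⟨k'', _, hb'⟩
    · have : i' = i := by
        have := hb'.symm
        simpa [uNode] using this
      subst this
      subst hd
      exact hdT
    · exact absurd hb' (by simp [eNode, uNode])
    · exact absurd hb' (by simp [e'Node, uNode])
  · exact absurd hb (by simp [e'Node, eNode])
end

section
/- Let G₀ = (V, A₀) be a finite loopless directed graph, r ∈ V, U ⊆ V. Suppose that every vertex v ∈ U that is not reachable from r in G₀ either belongs to some Edmonds connected subgraph of G₀ or is connected to some Edmonds connected subgraph of G₀, and suppose that at least one vertex of U is not reachable from r in G₀. Then there exists an Edmonds connected subgraph B of G₀ that is uncovered, i.e. δ⁻(B) = ∅. -/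
/-- `B` is weakly connected: connected when arc directions are ignored, using only
arcs with both endpoints in `B`. -/
def WeaklyConnectedIn {V : Type*} (A₀ : Finset (V × V)) (B : Finset V) : Prop :=
  ∀ a ∈ B, ∀ b ∈ B,
    Relation.ReflTransGen
      (fun x y => (x ∈ B ∧ y ∈ B) ∧ ((x, y) ∈ A₀ ∨ (y, x) ∈ A₀)) a b

/-- An Edmonds connected subgraph of `(V, A₀)` with respect to the root `r` and `U ⊆ V`:
a set `B ⊆ V \ {r}` with at least two vertices, weakly connected in `(V, A₀)`, such that
every node of `B ∩ U` is reachable by a directed path from every node of `B`. -/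
def IsEdmonds {V : Type*} (A₀ : Finset (V × V)) (r : V) (U : Set V) (B : Finset V) : Prop :=
  r ∉ B ∧ 2 ≤ B.card ∧ WeaklyConnectedIn A₀ B ∧
    ∀ i ∈ B, ∀ v ∈ B, v ∈ U → Reaches A₀ i v

/-!
Choose `v₀ ∈ U`, not reachable from `r`, whose set `W` of ancestors (vertices with a directed
path to `v₀`) is as small as possible. `W` is closed under predecessors, so no arc enters it,
and it is weakly connected through the paths into `v₀`. Every `t ∈ W ∩ U` is unreachable from
`r` as well and its ancestors form a subset of `W`; by minimality they are all of `W`, so `v₀`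
reaches `t`, and hence every vertex of `W` reaches `t`. The hypothesis on `v₀` gives a second
vertex in `W`.
-/

section Ancestors

variable {V : Type*} [Fintype V] (A : Finset (V × V))

open Classical in
noncomputable def ancestors (v : V) : Finset V :=
  Finset.univ.filter fun x => Reaches A x v

variable {A}

@[simp]
theorem mem_ancestors {v x : V} : x ∈ ancestors A v ↔ Reaches A x v := by
  simp [ancestors]

theorem self_mem_ancestors (v : V) : v ∈ ancestors A v :=
  mem_ancestors.mpr Relation.ReflTransGen.refl

theorem ancestors_subset_of_reaches {t v : V} (h : Reaches A t v) :
    ancestors A t ⊆ ancestors A v := fun _ hx =>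
  mem_ancestors.mpr ((mem_ancestors.mp hx).trans h)

theorem deltaMinus_ancestors [DecidableEq V] (v : V) : deltaMinus A (ancestors A v) = ∅ := by
  refine Finset.filter_eq_empty_iff.mpr fun e he ⟨hout, hin⟩ => hout ?_
  exact mem_ancestors.mpr ((Relation.ReflTransGen.single he).trans (mem_ancestors.mp hin))

theorem weaklyConnectedIn_ancestors (v : V) : WeaklyConnectedIn A (ancestors A v) := by
  set W := ancestors A v
  let R := fun x y => (x ∈ W ∧ y ∈ W) ∧ ((x, y) ∈ A ∨ (y, x) ∈ A)
  have : Std.Symm R := ⟨fun _ _ hxy => ⟨hxy.1.symm, hxy.2.symm⟩⟩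
  have to_root : ∀ a, Reaches A a v → Relation.ReflTransGen R a v := by
    intro a ha
    induction ha using Relation.ReflTransGen.head_induction_on with
    | refl => exact Relation.ReflTransGen.refl
    | head hstep htail ih =>
      exact Relation.ReflTransGen.head
        ⟨⟨mem_ancestors.mpr (Relation.ReflTransGen.head hstep htail), mem_ancestors.mpr htail⟩,
          Or.inl hstep⟩ ih
  intro a ha b hb
  exact (to_root a (mem_ancestors.mp ha)).trans
    (Std.Symm.symm _ _ (to_root b (mem_ancestors.mp hb)))

theorem reaches_of_card_ancestors_le {t v : V} (htv : Reaches A t v)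
    (hcard : (ancestors A v).card ≤ (ancestors A t).card) : Reaches A v t := by
  have heq := Finset.eq_of_subset_of_card_le (ancestors_subset_of_reaches htv) hcard
  exact mem_ancestors.mp (heq ▸ self_mem_ancestors v)

theorem one_lt_card_ancestors_of_isEdmonds {r : V} {U : Set V} {B : Finset V}
    (hB : IsEdmonds A r U B) {b v : V} (hbB : b ∈ B) (hbv : Reaches A b v) (hvU : v ∈ U) :
    1 < (ancestors A v).card := by
  by_cases hbv' : b = v
  · subst hbv'
    obtain ⟨i, hiB, hib⟩ := Finset.exists_mem_ne hB.2.1 b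
    exact Finset.one_lt_card.mpr
      ⟨i, mem_ancestors.mpr (hB.2.2.2 i hiB b hbB hvU), b, self_mem_ancestors b, hib⟩
  · exact Finset.one_lt_card.mpr ⟨b, mem_ancestors.mpr hbv, v, self_mem_ancestors v, hbv'⟩

theorem isEdmonds_ancestors {r v : V} {U : Set V} (hrv : ¬ Reaches A r v)
    (hcard : 1 < (ancestors A v).card)
    (hU : ∀ t ∈ ancestors A v, t ∈ U → Reaches A v t) :
    IsEdmonds A r U (ancestors A v) :=
  ⟨fun hr => hrv (mem_ancestors.mp hr), hcard, weaklyConnectedIn_ancestors v,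
    fun _ hi t ht htU => (mem_ancestors.mp hi).trans (hU t ht htU)⟩

end Ancestors

theorem stmt5_general {V : Type*} [Fintype V] [DecidableEq V]
    (A₀ : Finset (V × V)) (r : V) (U : Set V)
    (hcond : ∀ v ∈ U, ¬ Reaches A₀ r v →
      (∃ B : Finset V, IsEdmonds A₀ r U B ∧ v ∈ B) ∨
      (∃ B : Finset V, IsEdmonds A₀ r U B ∧ ∃ b ∈ B, Reaches A₀ b v))
    (hex : ∃ v ∈ U, ¬ Reaches A₀ r v) :
    ∃ B : Finset V, IsEdmonds A₀ r U B ∧ deltaMinus A₀ B = ∅ := by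
  classical
  let S := Finset.univ.filter fun x => x ∈ U ∧ ¬ Reaches A₀ r x
  obtain ⟨v, hvU, hvr⟩ := hex
  obtain ⟨v₀, hv₀S, hmin⟩ :=
    S.exists_min_image (fun x => (ancestors A₀ x).card) ⟨v, by simp [S, hvU, hvr]⟩
  obtain ⟨-, hv₀U, hv₀r⟩ := Finset.mem_filter.mp hv₀S
  have hcard : 1 < (ancestors A₀ v₀).card := by
    rcases hcond v₀ hv₀U hv₀r with ⟨B, hB, hv₀B⟩ | ⟨B, hB, b, hbB, hbv₀⟩
    · exact one_lt_card_ancestors_of_isEdmonds hB hv₀B Relation.ReflTransGen.refl hv₀U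
    · exact one_lt_card_ancestors_of_isEdmonds hB hbB hbv₀ hv₀U
  have hU : ∀ t ∈ ancestors A₀ v₀, t ∈ U → Reaches A₀ v₀ t := by
    intro t ht htU
    have htv₀ := mem_ancestors.mp ht
    have htS : t ∈ S := by simpa [S, htU] using fun hrt => hv₀r (hrt.trans htv₀)
    exact reaches_of_card_ancestors_le htv₀ (hmin t htS)
  exact ⟨ancestors A₀ v₀, isEdmonds_ancestors hv₀r hcard hU, deltaMinus_ancestors v₀⟩

/-- if every vertex of `U` not reachable from `r` in `G₀` belongs to, or is
connected to, some Edmonds connected subgraph of `G₀`, and some vertex of `U` is not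
reachable from `r`, then there is an uncovered Edmonds connected subgraph `B`
(`δ⁻(B) = ∅`). -/
theorem stmt5 {V : Type*} [Fintype V] [DecidableEq V]
    (A₀ : Finset (V × V)) (hloop : ∀ e ∈ A₀, e.1 ≠ e.2) (r : V) (U : Set V)
    (hcond : ∀ v ∈ U, ¬ Reaches A₀ r v →
      (∃ B : Finset V, IsEdmonds A₀ r U B ∧ v ∈ B) ∨
      (∃ B : Finset V, IsEdmonds A₀ r U B ∧ ∃ b ∈ B, Reaches A₀ b v))
    (hex : ∃ v ∈ U, ¬ Reaches A₀ r v) :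
    ∃ B : Finset V, IsEdmonds A₀ r U B ∧ deltaMinus A₀ B = ∅ :=
  stmt5_general A₀ r U hcond hex
end

section
/- Let G = (V, A) be a finite loopless directed graph, r ∈ V, and let F ⊆ A be a cover of G such that every strongly connected component K of the digraph (V, F) with at least two vertices satisfies F ∩ δ⁻(K) ≠ ∅. Then for every sink node j there exists a critical node i and a directed path from i to j in the digraph (V, F). -/
/-- `F` is a cover of `G = (V, A)`: for every arc `(u, v) ∈ A`,
`F ∩ δ⁻({u, v}) ≠ ∅`. -/
def IsCoverOf {V : Type*} [DecidableEq V] (A F : Finset (V × V)) : Prop :=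
  ∀ e ∈ A, (F ∩ deltaMinus A {e.1, e.2}).Nonempty

/-- The arcs of `F` entering the vertex `v`. -/
def inArcs {V : Type*} [DecidableEq V] (F : Finset (V × V)) (v : V) : Finset (V × V) :=
  F.filter fun f => f.2 = v

/-- A source node: not reachable from `r` in `(V, F)` and entered by no arc of `F`. -/
def IsSource {V : Type*} [DecidableEq V] (F : Finset (V × V)) (r v : V) : Prop :=
  ¬ Reaches F r v ∧ (inArcs F v).card = 0

/-- A sink node: not reachable from `r` in `(V, F)` and entered by exactly one arc of `F`. -/
def IsSink {V : Type*} [DecidableEq V] (F : Finset (V × V)) (r v : V) : Prop :=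
  ¬ Reaches F r v ∧ (inArcs F v).card = 1

/-- A critical node: not reachable from `r` in `(V, F)` and entered by at least two arcs
of `F`. -/
def IsCritical {V : Type*} [DecidableEq V] (F : Finset (V × V)) (r v : V) : Prop :=
  ¬ Reaches F r v ∧ 2 ≤ (inArcs F v).card

/-- A strongly connected component of `(V, F)`: a maximal set of mutually reachable
vertices. -/
def IsSCC {V : Type*} (F : Finset (V × V)) (K : Finset V) : Prop :=
  (∀ a ∈ K, ∀ b ∈ K, Reaches F a b) ∧
    ∀ K' : Finset V, K ⊆ K' → (∀ a ∈ K', ∀ b ∈ K', Reaches F a b) → K' = K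

/-- if `F ⊆ A` is a cover of `G = (V, A)` such that every strongly connected
component of `(V, F)` with at least two vertices is entered by an arc of `F`, then for
every sink node `j` there is a critical node `i` with a directed path from `i` to `j` in
`(V, F)`. -/
theorem stmt8 {V : Type*} [Fintype V] [DecidableEq V]
    (A : Finset (V × V)) (hloop : ∀ e ∈ A, e.1 ≠ e.2) (r : V)
    (F : Finset (V × V)) (hFA : F ⊆ A) (hcover : IsCoverOf A F)
    (hscc : ∀ K : Finset V, IsSCC F K → 2 ≤ K.card → (F ∩ deltaMinus A K).Nonempty) :
    ∀ j : V, IsSink F r j → ∃ i : V, IsCritical F r i ∧ Reaches F i j := by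
  classical
  intro j hj
  obtain ⟨hjr, hjcard⟩ := hj
  by_contra hcon
  push_neg at hcon
  have hnr : ∀ v, Reaches F v j → ¬ Reaches F r v := fun v hvj hrv =>
    hjr (Relation.ReflTransGen.trans hrv hvj)
  have hle : ∀ v, Reaches F v j → (inArcs F v).card ≤ 1 := by
    intro v hv
    by_contra h
    push_neg at h
    exact hcon v ⟨hnr v hv, h⟩ hv
  have hone : ∀ v, Reaches F v j → (inArcs F v).card = 1 := by
    intro v hv
    rcases Relation.ReflTransGen.cases_head hv with rfl | ⟨w, hvw, hwj⟩
    · exact hjcard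
    · have hvwA : (v, w) ∈ A := hFA hvw
      obtain ⟨e, he⟩ := hcover (v, w) hvwA
      simp only [Finset.mem_inter, deltaMinus, Finset.mem_filter, Finset.mem_insert,
        Finset.mem_singleton, not_or] at he
      obtain ⟨heF, -, ⟨he1v, he1w⟩, he2⟩ := he
      rcases he2 with h2v | h2w
      · have hmem : e ∈ inArcs F v := Finset.mem_filter.mpr ⟨heF, h2v⟩
        have h0 := Finset.card_pos.mpr ⟨e, hmem⟩
        have h1 := hle v hv
        omega
      · -- two arcs into w: e and (v,w)
        have hne : e ≠ (v, w) := by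
          intro h; apply he1v; rw [h]
        have h2 : 1 < (inArcs F w).card := by
          apply Finset.one_lt_card.mpr
          exact ⟨e, Finset.mem_filter.mpr ⟨heF, h2w⟩, (v, w),
            Finset.mem_filter.mpr ⟨hvw, rfl⟩, hne⟩
        have := hle w hwj
        omega
  have hpred : ∀ v, Reaches F v j → ∃ u, (u, v) ∈ F ∧ ∀ x, (x, v) ∈ F → x = u := by
    intro v hv
    obtain ⟨a, ha⟩ := Finset.card_eq_one.mp (hone v hv)
    have haF : a ∈ F ∧ a.2 = v := by
      have : a ∈ inArcs F v := by rw [ha]; exact Finset.mem_singleton_self a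
      exact Finset.mem_filter.mp this
    refine ⟨a.1, ?_, ?_⟩
    · have : (a.1, a.2) = a := rfl
      rw [← haF.2, this]; exact haF.1
    · intro x hx
      have : (x, v) ∈ inArcs F v := Finset.mem_filter.mpr ⟨hx, rfl⟩
      rw [ha, Finset.mem_singleton] at this
      rw [← this]
  -- build the backwards chain
  let g : ℕ → {v : V // Reaches F v j} := fun n =>
    Nat.rec ⟨j, Relation.ReflTransGen.refl⟩
      (fun _ p => ⟨(hpred p.1 p.2).choose,
        Relation.ReflTransGen.trans
          (Relation.ReflTransGen.single (hpred p.1 p.2).choose_spec.1) p.2⟩) n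
  have hgarc : ∀ n, ((g (n + 1)).1, (g n).1) ∈ F := fun n =>
    (hpred (g n).1 (g n).2).choose_spec.1
  have hchain : ∀ d m, Reaches F (g (m + d)).1 (g m).1 := by
    intro d
    induction d with
    | zero => intro m; exact Relation.ReflTransGen.refl
    | succ d ih =>
      intro m
      have : m + (d + 1) = (m + d) + 1 := by omega
      rw [this]
      exact Relation.ReflTransGen.trans
        (Relation.ReflTransGen.single (hgarc (m + d))) (ih m)
  obtain ⟨m, k, hmk, heq⟩ := Finite.exists_ne_map_eq_of_infinite (fun n => (g n).1)
  wlog hlt : m < k generalizing m k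
  · exact this k m (Ne.symm hmk) heq.symm (by omega)
  set c := (g m).1 with hc
  set c' := (g (m + 1)).1 with hc'
  have harc : (c', c) ∈ F := hgarc m
  have hne : c' ≠ c := hloop (c', c) (hFA harc)
  have hcc' : Reaches F c c' := by
    have h2 := hchain (k - m - 1) (m + 1)
    have hk : (m + 1) + (k - m - 1) = k := by omega
    rw [hk] at h2
    have heq' : (g m).1 = (g k).1 := heq
    rw [hc, hc', heq']
    exact h2
  have hcj : Reaches F c j := (g m).2
  -- the SCC containing c
  set K : Finset V := Finset.univ.filter (fun w => Reaches F c w ∧ Reaches F w c) with hK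
  have hmemK : ∀ w, w ∈ K ↔ Reaches F c w ∧ Reaches F w c := by
    intro w; simp [hK]
  have hcK : c ∈ K := (hmemK c).mpr ⟨Relation.ReflTransGen.refl, Relation.ReflTransGen.refl⟩
  have hc'K : c' ∈ K := (hmemK c').mpr ⟨hcc', Relation.ReflTransGen.single harc⟩
  have hSCC : IsSCC F K := by
    constructor
    · intro a ha b hb
      exact Relation.ReflTransGen.trans ((hmemK a).mp ha).2 ((hmemK b).mp hb).1
    · intro K' hsub hmut
      apply Finset.Subset.antisymm _ hsub
      intro z hz
      exact (hmemK z).mpr ⟨hmut c (hsub hcK) z hz, hmut z hz c (hsub hcK)⟩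
  have hcard2 : 2 ≤ K.card := by
    have hsub : ({c, c'} : Finset V) ⊆ K := by
      intro x hx
      rcases Finset.mem_insert.mp hx with rfl | hx
      · exact hcK
      · rw [Finset.mem_singleton.mp hx]; exact hc'K
    have := Finset.card_le_card hsub
    rwa [Finset.card_pair (Ne.symm hne)] at this
  obtain ⟨e, he⟩ := hscc K hSCC hcard2
  simp only [Finset.mem_inter, deltaMinus, Finset.mem_filter] at he
  obtain ⟨heF, -, hx, hy⟩ := he
  set x := e.1
  set y := e.2
  have hexy : (x, y) ∈ F := heF
  have hyc : Reaches F y c := ((hmemK y).mp hy).2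
  have hyj : Reaches F y j := Relation.ReflTransGen.trans hyc hcj
  -- pick w ∈ K with w ≠ y
  obtain ⟨w, hwK, hwy⟩ : ∃ w, w ∈ K ∧ w ≠ y := by
    by_cases h : y = c
    · exact ⟨c', hc'K, by rw [h]; exact hne⟩
    · exact ⟨c, hcK, fun hh => h hh.symm⟩
  have hwy' : Reaches F w y := Relation.ReflTransGen.trans ((hmemK w).mp hwK).2
    ((hmemK y).mp hy).1
  rcases Relation.ReflTransGen.cases_tail hwy' with h | ⟨z, hwz, hzy⟩
  · exact hwy h.symm
  · obtain ⟨u, -, huniq⟩ := hpred y hyj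
    have hzx : z = x := by rw [huniq z hzy, huniq x hexy]
    apply hx
    apply (hmemK x).mpr
    constructor
    · exact Relation.ReflTransGen.trans ((hmemK w).mp hwK).1 (hzx ▸ hwz)
    · exact Relation.ReflTransGen.trans (Relation.ReflTransGen.single hexy) hyc
end

section
/- Let G = (V, A) be a finite loopless directed graph, r ∈ V, and let F ⊆ A be a cover of G such that every strongly connected component K of the digraph (V, F) with at least two vertices satisfies F ∩ δ⁻(K) ≠ ∅. Let U consist of the vertices reachable from r in (V, F) together with all sink nodes and all critical nodes. Call a critical node v covered if there is an arc (w, v) ∈ F where w is not a source node. If every critical node is covered, then every critical node v satisfies at least one of the following: v is reachable from r in (V, F); or v belongs to some Edmonds connected subgraph of (V, F) with respect to r and U; or v is connected to some Edmonds connected subgraph of (V, F) with respect to r and U. -/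
/-- let `F ⊆ A` be a cover of `G = (V, A)` such that every strongly connected
component of `(V, F)` with at least two vertices is entered by an arc of `F`, and let `U`
consist of the vertices reachable from `r` in `(V, F)` together with the sink and critical
nodes. If every critical node `v` is covered (some arc `(w, v) ∈ F` with `w` not a source
node), then every critical node is reachable from `r` in `(V, F)`, or belongs to some
Edmonds connected subgraph of `(V, F)` w.r.t. `r` and `U`, or is connected to one. -/
theorem stmt9 {V : Type*} [Fintype V] [DecidableEq V]
    (A : Finset (V × V)) (hloop : ∀ e ∈ A, e.1 ≠ e.2) (r : V)
    (F : Finset (V × V)) (hFA : F ⊆ A) (hcover : IsCoverOf A F)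
    (hscc : ∀ K : Finset V, IsSCC F K → 2 ≤ K.card → (F ∩ deltaMinus A K).Nonempty)
    (U : Set V)
    (hU : U = {v | Reaches F r v ∨ IsSink F r v ∨ IsCritical F r v})
    (hcrit : ∀ v : V, IsCritical F r v →
      ∃ w : V, (w, v) ∈ F ∧ ¬ IsSource F r w) :
    ∀ v : V, IsCritical F r v →
      Reaches F r v ∨
      (∃ B : Finset V, IsEdmonds F r U B ∧ v ∈ B) ∨
      (∃ B : Finset V, IsEdmonds F r U B ∧ ∃ b ∈ B, Reaches F b v) := by
  classical
  intro v hv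
  obtain ⟨hvr, hvdeg⟩ := hv
  -- key predecessor lemma: every non-reachable node of indegree ≥ 1 has a predecessor
  -- that is non-reachable and has indegree ≥ 1
  have key : ∀ x : V, ¬ Reaches F r x → 1 ≤ (inArcs F x).card →
      ∃ w, ((w, x) ∈ F ∧ ¬ Reaches F r w) ∧ 1 ≤ (inArcs F w).card := by
    intro x hx hdeg
    have main : ∃ w, (w, x) ∈ F ∧ ¬ IsSource F r w := by
      by_cases h2 : 2 ≤ (inArcs F x).card
      · exact hcrit x ⟨hx, h2⟩
      · have h1 : (inArcs F x).card = 1 := by omega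
        obtain ⟨e, he⟩ := Finset.card_eq_one.mp h1
        have hemem : e ∈ inArcs F x := he ▸ Finset.mem_singleton_self e
        have heF : e ∈ F := (Finset.mem_filter.mp hemem).1
        have hex : e.2 = x := (Finset.mem_filter.mp hemem).2
        have heq : (e.1, x) = e := by rw [← hex]
        refine ⟨e.1, by rw [heq]; exact heF, ?_⟩
        rintro ⟨hwr, hw0⟩
        obtain ⟨f, hf⟩ := hcover (e.1, x) (hFA (by rw [heq]; exact heF))
        rw [Finset.mem_inter] at hf
        obtain ⟨hfF, hfd⟩ := hf
        simp only [deltaMinus, Finset.mem_filter, Finset.mem_insert,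
          Finset.mem_singleton] at hfd
        obtain ⟨hfA, hf1, hf2⟩ := hfd
        rcases hf2 with hf2 | hf2
        · have hmem : f ∈ inArcs F e.1 := Finset.mem_filter.mpr ⟨hfF, hf2⟩
          have := Finset.card_pos.mpr ⟨f, hmem⟩
          omega
        · have hmem : f ∈ inArcs F x := Finset.mem_filter.mpr ⟨hfF, hf2⟩
          rw [he, Finset.mem_singleton] at hmem
          subst hmem
          exact hf1 (Or.inl rfl)
    obtain ⟨w, hwF, hws⟩ := main
    have hwr : ¬ Reaches F r w := fun h => hx (Relation.ReflTransGen.tail h hwF)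
    refine ⟨w, ⟨hwF, hwr⟩, ?_⟩
    by_contra h
    exact hws ⟨hwr, by omega⟩
  have hv1 : 1 ≤ (inArcs F v).card := by omega
  -- build the backward walk
  let S := {x : V // ¬ Reaches F r x ∧ 1 ≤ (inArcs F x).card}
  let step : S → S := fun x =>
    ⟨(key x.1 x.2.1 x.2.2).choose, (key x.1 x.2.1 x.2.2).choose_spec.1.2,
      (key x.1 x.2.1 x.2.2).choose_spec.2⟩
  have hstep : ∀ x : S, ((step x).1, x.1) ∈ F :=
    fun x => (key x.1 x.2.1 x.2.2).choose_spec.1.1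
  let g : ℕ → S := fun n => step^[n] ⟨v, hvr, hv1⟩
  have hg0 : (g 0).1 = v := rfl
  have hgsucc : ∀ n, g (n + 1) = step (g n) := fun n =>
    Function.iterate_succ_apply' step n _
  have hreach : ∀ i k, Reaches F (g (i + k)).1 (g i).1 := by
    intro i k
    induction k with
    | zero => exact Relation.ReflTransGen.refl
    | succ k ih =>
      have h1 : Reaches F (g (i + k + 1)).1 (g (i + k)).1 := by
        rw [hgsucc]
        exact Relation.ReflTransGen.single (hstep (g (i + k)))
      exact Relation.ReflTransGen.trans h1 ih
  haveI : Finite S := Subtype.finite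
  obtain ⟨a, b, hab, hgab⟩ := Finite.exists_ne_map_eq_of_infinite g
  obtain ⟨i, j, hij, hgij⟩ : ∃ i j, i < j ∧ g i = g j := by
    rcases lt_or_gt_of_ne hab with h | h
    · exact ⟨a, b, h, hgab⟩
    · exact ⟨b, a, h, hgab.symm⟩
  -- c and d lie on a cycle
  have harccd : ((g (i + 1)).1, (g i).1) ∈ F := by
    rw [hgsucc]; exact hstep (g i)
  set c := (g i).1 with hcdef
  set d := (g (i + 1)).1 with hddef
  have hdc : d ≠ c := hloop (d, c) (hFA harccd)
  have hcd : Reaches F c d := by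
    have h1 : Reaches F (g ((i + 1) + (j - (i + 1)))).1 (g (i + 1)).1 :=
      hreach (i + 1) (j - (i + 1))
    have h2 : (i + 1) + (j - (i + 1)) = j := by omega
    rw [h2, ← hgij] at h1
    exact h1
  have hdc' : Reaches F d c := Relation.ReflTransGen.single harccd
  have hcv : Reaches F c v := by
    have h1 := hreach 0 i
    rw [Nat.zero_add, hg0] at h1
    exact h1
  have hcr : ¬ Reaches F r c := (g i).2.1
  -- the strong component of c
  let B : Finset V := Finset.univ.filter fun x => Reaches F c x ∧ Reaches F x c
  have hmemB : ∀ x, x ∈ B ↔ Reaches F c x ∧ Reaches F x c := by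
    intro x; simp [B]
  have hcB : c ∈ B := (hmemB c).mpr ⟨Relation.ReflTransGen.refl, Relation.ReflTransGen.refl⟩
  have hdB : d ∈ B := (hmemB d).mpr ⟨hcd, hdc'⟩
  -- weak connectivity of B
  have hwalk : ∀ x y : V, Relation.ReflTransGen (fun a b => (a, b) ∈ F) x y →
      Reaches F c x → Reaches F y c →
      Relation.ReflTransGen
        (fun a b => (a ∈ B ∧ b ∈ B) ∧ ((a, b) ∈ F ∨ (b, a) ∈ F)) x y := by
    intro x y hxy
    induction hxy with
    | refl => intro _ _; exact Relation.ReflTransGen.refl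
    | @tail p q hxp hpq ih =>
      intro hcx hqc
      have hpc : Reaches F p c :=
        Relation.ReflTransGen.trans (Relation.ReflTransGen.single hpq) hqc
      have hcp : Reaches F c p := Relation.ReflTransGen.trans hcx hxp
      refine Relation.ReflTransGen.tail (ih hcx hpc) ?_
      exact ⟨⟨(hmemB p).mpr ⟨hcp, hpc⟩,
        (hmemB q).mpr ⟨Relation.ReflTransGen.tail hcp hpq, hqc⟩⟩, Or.inl hpq⟩
  have hEdm : IsEdmonds F r U B := by
    refine ⟨?_, ?_, ?_, ?_⟩
    · intro hrB
      exact hcr ((hmemB r).mp hrB).2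
    · exact Finset.one_lt_card.mpr ⟨d, hdB, c, hcB, hdc⟩
    · intro a' ha' b' hb'
      obtain ⟨hca, hac⟩ := (hmemB a').mp ha'
      obtain ⟨hcb, hbc⟩ := (hmemB b').mp hb'
      exact hwalk a' b' (Relation.ReflTransGen.trans hac hcb) hca hbc
    · intro i' hi' u hu _
      obtain ⟨_, hic⟩ := (hmemB i').mp hi'
      obtain ⟨hcu, _⟩ := (hmemB u).mp hu
      exact Relation.ReflTransGen.trans hic hcu
  exact Or.inr (Or.inr ⟨B, hEdm, c, hcB, hcv⟩)
end

section
/- Let G = (V, A) be a finite loopless directed graph, r ∈ V, and let F ⊆ A be a cover of G such that every strongly connected component K of the digraph (V, F) with at least two vertices satisfies F ∩ δ⁻(K) ≠ ∅. Let U consist of the vertices reachable from r in (V, F) together with all sink nodes and all critical nodes. If every critical node is covered (i.e. for each critical node v there is an arc (w, v) ∈ F with w not a source node), then every vertex v ∈ U not reachable from r in (V, F) either belongs to some Edmonds connected subgraph of (V, F) with respect to r and U, or is connected to some Edmonds connected subgraph of (V, F) with respect to r and U. -/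
/-- let `F ⊆ A` be a cover of `G = (V, A)` such that every strongly
connected component of `(V, F)` with at least two vertices is entered by an arc of `F`,
and let `U` consist of the vertices reachable from `r` in `(V, F)` together with the sink
and critical nodes. If every critical node `v` is covered (some arc `(w, v) ∈ F` with `w`
not a source node), then every `v ∈ U` not reachable from `r` in `(V, F)` belongs to some
Edmonds connected subgraph of `(V, F)` w.r.t. `r` and `U`, or is connected to one. -/
theorem stmt10 {V : Type*} [Fintype V] [DecidableEq V]
    (A : Finset (V × V)) (hloop : ∀ e ∈ A, e.1 ≠ e.2) (r : V)
    (F : Finset (V × V)) (hFA : F ⊆ A) (hcover : IsCoverOf A F)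
    (hscc : ∀ K : Finset V, IsSCC F K → 2 ≤ K.card → (F ∩ deltaMinus A K).Nonempty)
    (U : Set V)
    (hU : U = {v | Reaches F r v ∨ IsSink F r v ∨ IsCritical F r v})
    (hcrit : ∀ v : V, IsCritical F r v →
      ∃ w : V, (w, v) ∈ F ∧ ¬ IsSource F r w) :
    ∀ v ∈ U, ¬ Reaches F r v →
      (∃ B : Finset V, IsEdmonds F r U B ∧ v ∈ B) ∨
      (∃ B : Finset V, IsEdmonds F r U B ∧ ∃ b ∈ B, Reaches F b v) := by
  -- Key step lemma: every non-reachable non-source vertex has a non-reachable,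
  -- non-source in-neighbor.
  have step : ∀ x : V, ¬ Reaches F r x → ¬ IsSource F r x →
      ∃ w : V, (w, x) ∈ F ∧ ¬ Reaches F r w ∧ ¬ IsSource F r w := by
    intro x hx hxs
    have hcard : (inArcs F x).card ≠ 0 := fun h => hxs ⟨hx, h⟩
    rcases Nat.lt_or_ge (inArcs F x).card 2 with h2 | h2
    · -- sink case: exactly one in-arc
      have h1 : (inArcs F x).card = 1 := by omega
      obtain ⟨e, he⟩ := Finset.card_eq_one.mp h1
      have heIn : e ∈ inArcs F x := he ▸ Finset.mem_singleton_self e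
      have heF : e ∈ F := (Finset.mem_filter.mp heIn).1
      have he2 : e.2 = x := (Finset.mem_filter.mp heIn).2
      have heP : e = (e.1, x) := by rw [← he2]
      refine ⟨e.1, heP ▸ heF, ?_, ?_⟩
      · intro hr
        exact hx (Relation.ReflTransGen.tail hr (heP ▸ heF))
      · intro hws
        have hexA : (e.1, x) ∈ A := hFA (heP ▸ heF)
        obtain ⟨a, ha⟩ := hcover (e.1, x) hexA
        rw [Finset.mem_inter] at ha
        obtain ⟨haF, haD⟩ := ha
        obtain ⟨haA, ha1, ha2⟩ := Finset.mem_filter.mp haD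
        simp only [Finset.mem_insert, Finset.mem_singleton] at ha1 ha2
        rcases ha2 with ha2 | ha2
        · have hmem : a ∈ inArcs F e.1 := Finset.mem_filter.mpr ⟨haF, ha2⟩
          have hpos : 0 < (inArcs F e.1).card := Finset.card_pos.mpr ⟨a, hmem⟩
          have hz := hws.2
          omega
        · have haIn : a ∈ inArcs F x := Finset.mem_filter.mpr ⟨haF, ha2⟩
          rw [he, Finset.mem_singleton] at haIn
          exact ha1 (Or.inl (by rw [haIn]))
      -- end sink case
    · -- critical case
      obtain ⟨w, hwF, hws⟩ := hcrit x ⟨hx, h2⟩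
      refine ⟨w, hwF, ?_, hws⟩
      intro hr
      exact hx (Relation.ReflTransGen.tail hr hwF)
  intro v hvU hvr
  -- v is not a source
  have hvs : ¬ IsSource F r v := by
    rw [hU] at hvU
    rcases hvU with h | h | h
    · exact absurd h hvr
    · intro hs; have h1 := h.2; have h2 := hs.2; omega
    · intro hs; have h1 := h.2; have h2 := hs.2; omega
  classical
  choose W hW1 hW2 hW3 using step
  -- build the backward sequence
  let g : ℕ → {x : V // ¬ Reaches F r x ∧ ¬ IsSource F r x} :=
    fun n => Nat.rec ⟨v, hvr, hvs⟩
      (fun _ p => ⟨W p.1 p.2.1 p.2.2, hW2 p.1 p.2.1 p.2.2, hW3 p.1 p.2.1 p.2.2⟩) n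
  let f : ℕ → V := fun n => (g n).1
  have hf0 : f 0 = v := rfl
  have hfn : ∀ n, (f (n + 1), f n) ∈ F := fun n => hW1 (g n).1 (g n).2.1 (g n).2.2
  have hnr : ∀ n, ¬ Reaches F r (f n) := fun n => (g n).2.1
  -- downward reachability along the sequence
  have hdown : ∀ d k, Reaches F (f (k + d)) (f k) := by
    intro d
    induction d with
    | zero => intro k; exact Relation.ReflTransGen.refl
    | succ d ih =>
      intro k
      exact Relation.ReflTransGen.head (hfn (k + d)) (ih k)
  have hdown' : ∀ k l, l ≤ k → Reaches F (f k) (f l) := by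
    intro k l hlk
    obtain ⟨d, rfl⟩ := Nat.exists_eq_add_of_le hlk
    exact hdown d l
  -- pigeonhole: find i < j with f i = f j
  obtain ⟨a, b, hab, heqab⟩ := Finite.exists_ne_map_eq_of_infinite f
  obtain ⟨i, j, hij, hfij⟩ : ∃ i j : ℕ, i < j ∧ f i = f j := by
    rcases lt_or_gt_of_ne hab with h | h
    · exact ⟨a, b, h, heqab⟩
    · exact ⟨b, a, h, heqab.symm⟩
  -- the cycle has at least two vertices
  have harcA : ∀ n, (f (n + 1), f n) ∈ A := fun n => hFA (hfn n)
  have hij2 : i + 1 < j := by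
    rcases Nat.lt_or_ge (i + 1) j with h | h
    · exact h
    · exfalso
      have hji : j = i + 1 := by omega
      have : f (i + 1) ≠ f i := hloop _ (harcA i)
      rw [← hji, ← hfij] at this
      exact this rfl
  set B : Finset V := (Finset.Ico i j).image f with hB
  have hmemB : ∀ m, i ≤ m → m ≤ j → f m ∈ B := by
    intro m h1 h2
    rcases eq_or_lt_of_le h2 with rfl | h2
    · rw [← hfij]
      exact Finset.mem_image_of_mem f (Finset.mem_Ico.mpr ⟨le_refl i, hij⟩)
    · exact Finset.mem_image_of_mem f (Finset.mem_Ico.mpr ⟨h1, h2⟩)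
  -- mutual reachability inside B
  have hmut : ∀ x ∈ B, ∀ y ∈ B, Reaches F x y := by
    intro x hx y hy
    obtain ⟨k, hk, rfl⟩ := Finset.mem_image.mp hx
    obtain ⟨l, hl, rfl⟩ := Finset.mem_image.mp hy
    rw [Finset.mem_Ico] at hk hl
    have h1 : Reaches F (f k) (f i) := hdown' k i hk.1
    have h2 : Reaches F (f j) (f l) := hdown' j l (le_of_lt hl.2)
    rw [← hfij] at h2
    exact h1.trans h2
  -- weak connectivity inside B
  have hweak : WeaklyConnectedIn F B := by
    intro x hx y hy
    set rel : V → V → Prop :=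
      fun x y => (x ∈ B ∧ y ∈ B) ∧ ((x, y) ∈ F ∨ (y, x) ∈ F) with hrel
    have hrel_step : ∀ m, i ≤ m → m + 1 ≤ j →
        rel (f m) (f (m + 1)) ∧ rel (f (m + 1)) (f m) := by
      intro m h1 h2
      have hm : f m ∈ B := hmemB m h1 (by omega)
      have hm1 : f (m + 1) ∈ B := hmemB (m + 1) (by omega) h2
      exact ⟨⟨⟨hm, hm1⟩, Or.inr (hfn m)⟩, ⟨⟨hm1, hm⟩, Or.inl (hfn m)⟩⟩
    have hup : ∀ d k, i ≤ k → k + d ≤ j →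
        Relation.ReflTransGen rel (f k) (f (k + d)) := by
      intro d
      induction d with
      | zero => intro k _ _; exact Relation.ReflTransGen.refl
      | succ d ih =>
        intro k h1 h2
        exact Relation.ReflTransGen.tail (ih k h1 (by omega))
          (hrel_step (k + d) (by omega) (by omega)).1
    have hdn : ∀ d k, i ≤ k → k + d ≤ j →
        Relation.ReflTransGen rel (f (k + d)) (f k) := by
      intro d
      induction d with
      | zero => intro k _ _; exact Relation.ReflTransGen.refl
      | succ d ih =>
        intro k h1 h2
        exact Relation.ReflTransGen.head
          (hrel_step (k + d) (by omega) (by omega)).2 (ih k h1 (by omega))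
    obtain ⟨k, hk, rfl⟩ := Finset.mem_image.mp hx
    obtain ⟨l, hl, rfl⟩ := Finset.mem_image.mp hy
    rw [Finset.mem_Ico] at hk hl
    have h1 : Relation.ReflTransGen rel (f k) (f i) := by
      obtain ⟨d, rfl⟩ := Nat.exists_eq_add_of_le hk.1
      exact hdn d i (le_refl i) (by omega)
    have h2 : Relation.ReflTransGen rel (f i) (f l) := by
      obtain ⟨d, rfl⟩ := Nat.exists_eq_add_of_le hl.1
      exact hup d i (le_refl i) (by omega)
    exact h1.trans h2
  -- B is an Edmonds connected subgraph
  have hEd : IsEdmonds F r U B := by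
    refine ⟨?_, ?_, hweak, fun a ha b hb _ => hmut a ha b hb⟩
    · intro hrB
      obtain ⟨k, _, hkv⟩ := Finset.mem_image.mp hrB
      exact hnr k (hkv ▸ Relation.ReflTransGen.refl)
    · have hm1 : f i ∈ B := hmemB i (le_refl i) (le_of_lt hij)
      have hm2 : f (i + 1) ∈ B := hmemB (i + 1) (by omega) (by omega)
      have hne : f i ≠ f (i + 1) := (hloop _ (harcA i)).symm
      exact Finset.one_lt_card.mpr ⟨f i, hm1, f (i + 1), hm2, hne⟩
  right
  exact ⟨B, hEd, f i, hmemB i (le_refl i) (le_of_lt hij), hf0 ▸ hdown' i 0 (Nat.zero_le i)⟩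
end
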